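/- Fix $K \ge 1$ and let $d = K+1$, $\mathcal{C} = B(0, D_1) \subseteq \mathbb{R}^d$, and let $f$ be the smoothed max function from the hard instance (convolution of $h(x) = \max_i x_i$ with a kernel supported in $\{0 < z_d < \cdots < z_1 < D_1/(4\sqrt{d})\}$). Consider any sequence $z_1 = x_1 = 0$, $x_t = \Pi_{\mathcal{C}}(z_t)$, $z_{t+1} \in z_1 + \mathrm{span}\{n_1, \dots, n_t, x_1 - z_1, \dots, x_t - z_t\}$ where $n_t = \nabla f(x_t)/\|\nabla f(x_t)\|$. Then for every $t \le K+1$, both $x_t$ and $z_t$ lie in $\mathrm{span}\{e_1, \dots, e_{t-1}\}$, and consequently $f(x_t) > 0$ for every $t$, while $\min_{u \in \mathcal{C}} f(u) \le -\tfrac{3D_1}{4\sqrt{d}}$. Hence every output $\hat{x} \in \{x_1, \dots, x_{K+1}\}$ satisfies $f(\hat{x}) - \min_{\mathcal{C}} f \ge \tfrac{3D_1}{4\sqrt{K+1}}$. -/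

import Mathlib

open MeasureTheory

/-- `maxCoord x = max_{1 ≤ i ≤ d} x_i`. -/
noncomputable def maxCoord {d : ℕ} (hd : 0 < d) (x : EuclideanSpace ℝ (Fin d)) : ℝ :=
  Finset.univ.sup' ⟨⟨0, hd⟩, Finset.mem_univ _⟩ (fun i => x i)

section Aux
variable {d : ℕ} (hd : 0 < d)

lemma le_maxCoord (x : EuclideanSpace ℝ (Fin d)) (i : Fin d) : x i ≤ maxCoord hd x :=
  Finset.le_sup' _ (Finset.mem_univ i)

lemma maxCoord_le {x : EuclideanSpace ℝ (Fin d)} {c : ℝ} (h : ∀ i, x i ≤ c) :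
    maxCoord hd x ≤ c := Finset.sup'_le _ _ fun i _ => h i

lemma abs_coord_le_norm (x : EuclideanSpace ℝ (Fin d)) (i : Fin d) : |x i| ≤ ‖x‖ := by
  have := EuclideanSpace.norm_eq x
  have h1 : |x i| = Real.sqrt (|x i| ^ 2) := by
    rw [Real.sqrt_sq_eq_abs, abs_abs]
  rw [this, h1]
  apply Real.sqrt_le_sqrt
  exact Finset.single_le_sum (f := fun j => ‖x j‖ ^ 2) (fun j _ => by positivity) (Finset.mem_univ i)

lemma abs_maxCoord_le_norm (x : EuclideanSpace ℝ (Fin d)) : |maxCoord hd x| ≤ ‖x‖ := by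
  rw [abs_le]
  constructor
  · have := le_maxCoord hd x ⟨0, hd⟩
    have h2 := abs_coord_le_norm x ⟨0, hd⟩
    have := neg_abs_le (x ⟨0, hd⟩)
    linarith
  · refine maxCoord_le hd fun i => ?_
    have := abs_coord_le_norm x i
    have := le_abs_self (x i)
    linarith

lemma maxCoord_sub_le (x y : EuclideanSpace ℝ (Fin d)) :
    maxCoord hd x - maxCoord hd y ≤ ‖x - y‖ := by
  have : maxCoord hd x ≤ maxCoord hd y + ‖x - y‖ := by
    refine maxCoord_le hd fun i => ?_
    have h1 : x i = y i + (x - y) i := by simp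
    have h2 := le_maxCoord hd y i
    have h3 := abs_coord_le_norm (x - y) i
    have := le_abs_self ((x - y) i)
    linarith
  linarith

lemma abs_maxCoord_sub_le (x y : EuclideanSpace ℝ (Fin d)) :
    |maxCoord hd x - maxCoord hd y| ≤ ‖x - y‖ := by
  rw [abs_le]
  refine ⟨?_, maxCoord_sub_le hd x y⟩
  have h1 := maxCoord_sub_le hd y x
  have h2 : ‖y - x‖ = ‖x - y‖ := norm_sub_rev y x
  linarith

lemma continuous_maxCoord : Continuous (maxCoord hd) := by
  have : LipschitzWith 1 (maxCoord hd) := by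
    refine LipschitzWith.of_dist_le_mul fun a b => ?_
    rw [Real.dist_eq, dist_eq_norm]
    simpa using abs_maxCoord_sub_le hd a b
  exact this.continuous

lemma sum_single_eq (v : EuclideanSpace ℝ (Fin d)) :
    ∑ i, v i • EuclideanSpace.single i (1:ℝ) = v := by
  ext j
  have : (∑ i, v i • EuclideanSpace.single i (1:ℝ)) j
      = ∑ i, (v i • EuclideanSpace.single i (1:ℝ)) j := by
    rw [WithLp.ofLp_sum]; exact Finset.sum_apply j Finset.univ _
  rw [this]
  simp [EuclideanSpace.single_apply]

lemma mem_span_single_iff (T : Set (Fin d)) (v : EuclideanSpace ℝ (Fin d)) :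
    v ∈ Submodule.span ℝ ((fun i : Fin d => EuclideanSpace.single i (1 : ℝ)) '' T) ↔
      ∀ j, j ∉ T → v j = 0 := by
  constructor
  · intro hv j hj
    induction hv using Submodule.span_induction with
    | mem w hw =>
      obtain ⟨i, hi, rfl⟩ := hw
      simp only [EuclideanSpace.single_apply, ite_eq_right_iff]
      intro h; exact absurd (h ▸ hj) (by simp [hi])
    | zero => simp
    | add a b _ _ ha hb => simp [ha, hb]
    | smul c a _ ha => simp [ha]
  · intro h
    have : v = ∑ i, v i • EuclideanSpace.single i (1:ℝ) := (sum_single_eq v).symm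
    rw [this]
    refine Submodule.sum_mem _ fun i _ => ?_
    by_cases hi : i ∈ T
    · exact Submodule.smul_mem _ _ (Submodule.subset_span ⟨i, hi, rfl⟩)
    · rw [h i hi]; simp

lemma proj_ball_smul {D1 : ℝ} (hD1 : 0 < D1) (zv xv : EuclideanSpace ℝ (Fin d))
    (hx : xv ∈ Metric.closedBall (0 : EuclideanSpace ℝ (Fin d)) D1)
    (hmin : ∀ u ∈ Metric.closedBall (0 : EuclideanSpace ℝ (Fin d)) D1,
      dist zv xv ≤ dist zv u) : ∃ c : ℝ, xv = c • zv := by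
  by_cases hz : ‖zv‖ ≤ D1
  · refine ⟨1, ?_⟩
    have hmem : zv ∈ Metric.closedBall (0 : EuclideanSpace ℝ (Fin d)) D1 := by
      simpa [Metric.mem_closedBall, dist_zero_right] using hz
    have h0 := hmin zv hmem
    simp only [dist_self] at h0
    have : dist zv xv = 0 := le_antisymm h0 dist_nonneg
    rw [one_smul]
    exact (dist_eq_zero.mp this).symm
  · push_neg at hz
    have hzpos : 0 < ‖zv‖ := lt_trans hD1 hz
    set p : EuclideanSpace ℝ (Fin d) := (D1 / ‖zv‖) • zv with hp
    have hpnorm : ‖p‖ = D1 := by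
      rw [hp, norm_smul, Real.norm_eq_abs, abs_of_pos (by positivity)]
      field_simp
    have hpmem : p ∈ Metric.closedBall (0 : EuclideanSpace ℝ (Fin d)) D1 := by
      simp [Metric.mem_closedBall, dist_zero_right, hpnorm]
    have hdistp : dist zv p = ‖zv‖ - D1 := by
      have : zv - p = (1 - D1 / ‖zv‖) • zv := by
        rw [hp, sub_smul, one_smul]
      rw [dist_eq_norm, this, norm_smul, Real.norm_eq_abs,
        abs_of_pos (by rw [sub_pos]; rw [div_lt_one hzpos]; exact hz)]
      field_simp
    -- p is a minimizer
    have hpmin : ∀ u ∈ Metric.closedBall (0 : EuclideanSpace ℝ (Fin d)) D1,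
        dist zv p ≤ dist zv u := by
      intro u hu
      rw [hdistp]
      have h1 : ‖u‖ ≤ D1 := by simpa [Metric.mem_closedBall, dist_zero_right] using hu
      have h2 : ‖zv‖ - ‖u‖ ≤ ‖zv - u‖ := by
        have := norm_sub_norm_le zv u
        linarith
      rw [dist_eq_norm]
      linarith
    have hD : dist zv xv = dist zv p := le_antisymm (hmin p hpmem) (hpmin xv hx)
    -- midpoint argument
    set m : EuclideanSpace ℝ (Fin d) := (2⁻¹ : ℝ) • (xv + p) with hm
    have hmmem : m ∈ Metric.closedBall (0 : EuclideanSpace ℝ (Fin d)) D1 := by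
      have hxn : ‖xv‖ ≤ D1 := by simpa [Metric.mem_closedBall, dist_zero_right] using hx
      have : ‖m‖ ≤ 2⁻¹ * (‖xv‖ + ‖p‖) := by
        rw [hm, norm_smul]
        simp only [Real.norm_eq_abs]
        rw [abs_of_pos (by norm_num)]
        have := norm_add_le xv p
        nlinarith
      simp only [Metric.mem_closedBall, dist_zero_right]
      rw [hpnorm] at this
      linarith
    have hmge : dist zv xv ≤ dist zv m := hmin m hmmem
    have hpar := parallelogram_law_with_norm ℝ (zv - xv) (zv - p)
    have hsum : (zv - xv) + (zv - p) = (2:ℝ) • (zv - m) := by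
      rw [hm]; module
    have hdiff : (zv - xv) - (zv - p) = p - xv := by abel
    rw [hsum, hdiff, norm_smul] at hpar
    simp only [Real.norm_eq_abs] at hpar
    rw [abs_of_pos (by norm_num : (0:ℝ) < 2)] at hpar
    have e1 : ‖zv - xv‖ = dist zv xv := (dist_eq_norm zv xv).symm
    have e2 : ‖zv - p‖ = dist zv xv := by rw [← dist_eq_norm, ← hD]
    have e3 : dist zv xv ≤ ‖zv - m‖ := by rw [← dist_eq_norm] at *; exact hmge
    have hpx : ‖p - xv‖ = 0 := by
      have h0 : 0 ≤ ‖p - xv‖ := norm_nonneg _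
      have h1 : 0 ≤ dist zv xv := dist_nonneg
      nlinarith [hpar]
    have : p = xv := by
      have := norm_sub_eq_zero_iff.mp hpx
      exact this
    exact ⟨D1 / ‖zv‖, by rw [← this, hp]⟩

end Aux

section Main
variable {K : ℕ} {D1 : ℝ}

/-- the chain set -/
def chainSet (K : ℕ) (D1 : ℝ) : Set (EuclideanSpace ℝ (Fin (K + 1))) :=
  {z | 0 < z ⟨K, Nat.lt_succ_self K⟩ ∧
    (∀ i j : Fin (K + 1), i < j → z j < z i) ∧
    z ⟨0, Nat.succ_pos K⟩ < D1 / (4 * Real.sqrt (K + 1))}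

lemma chain_coord_bounds (hD1 : 0 < D1) {zv : EuclideanSpace ℝ (Fin (K+1))}
    (hz : zv ∈ chainSet K D1) (i : Fin (K+1)) :
    0 < zv i ∧ zv i < D1 / (4 * Real.sqrt (K + 1)) := by
  obtain ⟨h1, h2, h3⟩ := hz
  constructor
  · by_cases h : (i : ℕ) = K
    · rw [show i = ⟨K, Nat.lt_succ_self K⟩ from Fin.ext h]; exact h1
    · refine lt_trans h1 (h2 i ⟨K, Nat.lt_succ_self K⟩ ?_)
      have := i.isLt; simp only [Fin.lt_def]; omega
  · by_cases h : (i : ℕ) = 0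
    · rw [show i = ⟨0, Nat.succ_pos K⟩ from Fin.ext h]; exact h3
    · refine lt_trans (h2 ⟨0, Nat.succ_pos K⟩ i ?_) h3
      simp only [Fin.lt_def]; omega

lemma chain_norm_le (hD1 : 0 < D1) {zv : EuclideanSpace ℝ (Fin (K+1))}
    (hz : zv ∈ chainSet K D1) : ‖zv‖ ≤ D1 / 4 := by
  set s := Real.sqrt (K+1) with hs
  have hspos : 0 < s := Real.sqrt_pos.mpr (by positivity)
  have hs2 : s ^ 2 = (K+1 : ℝ) := Real.sq_sqrt (by positivity)
  have hb : ∀ i, |zv i| ≤ D1 / (4 * s) := fun i => by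
    obtain ⟨h1, h2⟩ := chain_coord_bounds hD1 hz i
    rw [abs_of_pos h1]; exact le_of_lt h2
  rw [EuclideanSpace.norm_eq]
  have : ∑ i, ‖zv i‖ ^ 2 ≤ (K+1 : ℝ) * (D1 / (4*s))^2 := by
    calc ∑ i, ‖zv i‖ ^ 2 ≤ ∑ _i : Fin (K+1), (D1 / (4*s))^2 := by
          refine Finset.sum_le_sum fun i _ => ?_
          have := hb i
          rw [Real.norm_eq_abs]
          nlinarith [abs_nonneg (zv i)]
      _ = (K+1 : ℝ) * (D1 / (4*s))^2 := by simp [Finset.sum_const]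
  have hle := Real.sqrt_le_sqrt this
  refine le_trans hle ?_
  rw [show (K+1:ℝ) * (D1/(4*s))^2 = (D1/4)^2 * ((K+1:ℝ)/s^2) by ring, hs2]
  rw [div_self (by positivity), mul_one, Real.sqrt_sq (by positivity)]

variable {ρ : EuclideanSpace ℝ (Fin (K + 1)) → ℝ}

lemma rho_integrable (hρint : ∫ z, ρ z = 1) : Integrable ρ := by
  by_contra h
  rw [integral_undef h] at hρint
  norm_num at hρint

lemma integrable_mul_rho (hD1 : 0 < D1) (hρcont : Continuous ρ) (hρnn : ∀ z, 0 ≤ ρ z)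
    (hρint : ∫ z, ρ z = 1) (hρsupp : Function.support ρ ⊆ chainSet K D1)
    {g : EuclideanSpace ℝ (Fin (K+1)) → ℝ} (hgcont : Continuous g) {C : ℝ}
    (hC : ∀ z ∈ chainSet K D1, |g z| ≤ C) :
    Integrable (fun z => g z * ρ z) := by
  refine Integrable.mono' ((rho_integrable hρint).const_mul C) ((hgcont.mul hρcont).aestronglyMeasurable) ?_
  refine Filter.Eventually.of_forall fun z => ?_
  rw [Real.norm_eq_abs, abs_mul, abs_of_nonneg (hρnn z)]
  by_cases hz : ρ z = 0
  · simp [hz]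
  · exact mul_le_mul_of_nonneg_right (hC z (hρsupp hz)) (hρnn z)

end Main

section F
variable {K : ℕ} {D1 : ℝ} {ρ f : EuclideanSpace ℝ (Fin (K + 1)) → ℝ}
variable (hD1 : 0 < D1) (hρcont : Continuous ρ) (hρnn : ∀ z, 0 ≤ ρ z)
  (hρint : ∫ z, ρ z = 1) (hρsupp : Function.support ρ ⊆ chainSet K D1)
  (hf : ∀ x, f x = ∫ z, maxCoord (Nat.succ_pos K) (x + z) * ρ z)

lemma cont_maxCoord_shift (v : EuclideanSpace ℝ (Fin (K+1))) :
    Continuous (fun z : EuclideanSpace ℝ (Fin (K+1)) => maxCoord (Nat.succ_pos K) (v + z)) :=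
  (continuous_maxCoord _).comp (continuous_const.add continuous_id)

include hD1 hρcont hρnn hρint hρsupp in
lemma integrable_main (v : EuclideanSpace ℝ (Fin (K+1))) :
    Integrable (fun z => maxCoord (Nat.succ_pos K) (v + z) * ρ z) := by
  refine integrable_mul_rho hD1 hρcont hρnn hρint hρsupp (cont_maxCoord_shift v)
    (C := ‖v‖ + D1/4) fun z hz => ?_
  calc |maxCoord (Nat.succ_pos K) (v + z)| ≤ ‖v + z‖ := abs_maxCoord_le_norm _ _
    _ ≤ ‖v‖ + ‖z‖ := norm_add_le _ _
    _ ≤ ‖v‖ + D1/4 := by linarith [chain_norm_le hD1 hz]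

include hD1 hρcont hρnn hρint hρsupp hf in
lemma f_lower (v : EuclideanSpace ℝ (Fin (K+1))) : -(‖v‖ + D1/4) ≤ f v := by
  rw [hf v]
  have h1 : Integrable (fun z => (-(‖v‖ + D1/4)) * ρ z) :=
    (rho_integrable hρint).const_mul _
  have h2 := integrable_main hD1 hρcont hρnn hρint hρsupp v
  have := integral_mono h1 h2 (fun z => ?_)
  · calc -(‖v‖ + D1/4) = ∫ z, (-(‖v‖ + D1/4)) * ρ z := by
          rw [integral_const_mul, hρint, mul_one]
      _ ≤ _ := this
  · by_cases hz : ρ z = 0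
    · simp [hz]
    · have hzc := hρsupp hz
      have hb : |maxCoord (Nat.succ_pos K) (v + z)| ≤ ‖v‖ + D1/4 := by
        calc |maxCoord (Nat.succ_pos K) (v + z)| ≤ ‖v + z‖ := abs_maxCoord_le_norm _ _
          _ ≤ ‖v‖ + ‖z‖ := norm_add_le _ _
          _ ≤ ‖v‖ + D1/4 := by linarith [chain_norm_le hD1 hzc]
      have := neg_abs_le (maxCoord (Nat.succ_pos K) (v + z))
      exact mul_le_mul_of_nonneg_right (by linarith) (hρnn z)

include hD1 hρcont hρnn hρint hρsupp hf in
lemma f_pos (v : EuclideanSpace ℝ (Fin (K+1)))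
    (hv : v ⟨K, Nat.lt_succ_self K⟩ = 0) : 0 < f v := by
  set iK : Fin (K+1) := ⟨K, Nat.lt_succ_self K⟩ with hiK
  have hint2 : Integrable (fun z : EuclideanSpace ℝ (Fin (K+1)) => z iK * ρ z) := by
    refine integrable_mul_rho hD1 hρcont hρnn hρint hρsupp ((continuous_apply _).comp (PiLp.continuous_ofLp _ _))
      (C := D1/4) fun z hz => ?_
    have := abs_coord_le_norm z iK
    linarith [chain_norm_le hD1 hz]
  have hpos : 0 < ∫ z, z iK * ρ z := by
    rw [integral_pos_iff_support_of_nonneg]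
    · have hsupp_eq : Function.support (fun z : EuclideanSpace ℝ (Fin (K+1)) => z iK * ρ z)
          = Function.support ρ := by
        ext w
        simp only [Function.mem_support, mul_ne_zero_iff]
        constructor
        · exact fun h => h.2
        · intro h
          exact ⟨ne_of_gt (hρsupp h).1, h⟩
      rw [hsupp_eq]
      by_contra h
      push_neg at h
      have h0 : volume (Function.support ρ) = 0 := le_antisymm h zero_le
      have : ∫ z, ρ z = 0 := by
        refine integral_eq_zero_of_ae ?_
        rw [Filter.EventuallyEq, ae_iff]
        simpa [Function.support] using h0
      rw [hρint] at this; norm_num at this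
    · intro w
      by_cases hw : ρ w = 0
      · simp [hw]
      · exact le_of_lt (mul_pos (hρsupp hw).1 (lt_of_le_of_ne (hρnn w) (Ne.symm hw)))
    · exact hint2
  rw [hf v]
  refine lt_of_lt_of_le hpos (integral_mono hint2
    (integrable_main hD1 hρcont hρnn hρint hρsupp v) fun w => ?_)
  by_cases hw : ρ w = 0
  · simp [hw]
  · refine mul_le_mul_of_nonneg_right ?_ (hρnn w)
    have := le_maxCoord (Nat.succ_pos K) (v + w) iK
    have hvw : (v + w) iK = w iK := by simp [hv]
    linarith [hvw ▸ this]

end F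

section G
variable {K : ℕ} {D1 : ℝ} {ρ f : EuclideanSpace ℝ (Fin (K + 1)) → ℝ}
variable (hD1 : 0 < D1) (hρcont : Continuous ρ) (hρnn : ∀ z, 0 ≤ ρ z)
  (hρint : ∫ z, ρ z = 1) (hρsupp : Function.support ρ ⊆ chainSet K D1)
  (hf : ∀ x, f x = ∫ z, maxCoord (Nat.succ_pos K) (x + z) * ρ z)

include hD1 hρcont hρnn hρint hρsupp hf in
lemma f_min_bound :
    ∃ u ∈ Metric.closedBall (0 : EuclideanSpace ℝ (Fin (K + 1))) D1,
      f u ≤ -(3 * D1 / (4 * Real.sqrt (K + 1))) := by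
  set s := Real.sqrt (K+1) with hs
  have hspos : 0 < s := Real.sqrt_pos.mpr (by positivity)
  have hs2 : s ^ 2 = (K+1 : ℝ) := Real.sq_sqrt (by positivity)
  set u : EuclideanSpace ℝ (Fin (K+1)) := WithLp.toLp 2 (fun _ => -(D1 / s)) with hu
  have hunorm : ‖u‖ = D1 := by
    have hsum : ∑ i : Fin (K+1), ‖u i‖^2 = D1^2 := by
      have hco : ∀ i : Fin (K+1), ‖u i‖ ^ 2 = D1^2 / s^2 := fun i => by
        rw [hu, PiLp.toLp_apply]; rw [Real.norm_eq_abs, sq_abs, neg_sq, div_pow]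
      rw [Finset.sum_congr rfl fun i _ => hco i, Finset.sum_const, Finset.card_univ,
        Fintype.card_fin, nsmul_eq_mul, hs2]
      push_cast
      field_simp
    rw [EuclideanSpace.norm_eq, hsum]
    exact Real.sqrt_sq hD1.le
  refine ⟨u, by simp [Metric.mem_closedBall, dist_zero_right, hunorm], ?_⟩
  rw [hf u]
  have h2 := integrable_main hD1 hρcont hρnn hρint hρsupp u
  have h1 : Integrable (fun z => (-(3 * D1 / (4 * s))) * ρ z) :=
    (rho_integrable hρint).const_mul _
  have hmono := integral_mono h2 h1 (fun z => ?_)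
  · calc ∫ z, maxCoord (Nat.succ_pos K) (u + z) * ρ z
        ≤ ∫ z, (-(3 * D1 / (4 * s))) * ρ z := hmono
      _ = -(3 * D1 / (4 * s)) := by rw [integral_const_mul, hρint, mul_one]
  · by_cases hz : ρ z = 0
    · simp [hz]
    · refine mul_le_mul_of_nonneg_right ?_ (hρnn z)
      refine maxCoord_le _ fun i => ?_
      have hzi := (chain_coord_bounds hD1 (hρsupp hz) i).2
      have : (u + z) i = -(D1/s) + z i := by simp [hu]
      rw [this]
      have : z i < D1 / (4 * s) := hzi
      have hsplit : -(D1/s) + D1/(4*s) = -(3 * D1/(4*s)) := by field_simp; ring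
      linarith

end G

section Grad
variable {K : ℕ} {D1 : ℝ} {ρ f : EuclideanSpace ℝ (Fin (K + 1)) → ℝ}
variable (hD1 : 0 < D1) (hρcont : Continuous ρ) (hρnn : ∀ z, 0 ≤ ρ z)
  (hρint : ∫ z, ρ z = 1) (hρsupp : Function.support ρ ⊆ chainSet K D1)
  (hf : ∀ x, f x = ∫ z, maxCoord (Nat.succ_pos K) (x + z) * ρ z)

include hD1 hρcont hρnn hρint hρsupp hf in
lemma grad_coord_zero (v : EuclideanSpace ℝ (Fin (K+1))) (r : ℕ) (hr : r ≤ K)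
    (hv : ∀ i : Fin (K+1), r ≤ (i : ℕ) → v i = 0)
    (j : Fin (K+1)) (hj : r < (j : ℕ)) : gradient f v j = 0 := by
  by_cases hdiff : DifferentiableAt ℝ f v
  case neg =>
    rw [gradient_eq_zero_of_not_differentiableAt hdiff]
    rfl
  set i₀ : Fin (K+1) := ⟨r, by omega⟩ with hi₀
  set e : EuclideanSpace ℝ (Fin (K+1)) := EuclideanSpace.single j (1:ℝ) with he
  -- key pointwise invariance
  have hkey : ∀ z ∈ chainSet K D1, ∀ s : ℝ, |s| < z i₀ - z j →
      maxCoord (Nat.succ_pos K) (v + s • e + z) = maxCoord (Nat.succ_pos K) (v + z) := by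
    intro z hz s hs
    have hij : i₀ < j := by rw [Fin.lt_def]; exact hj
    have hzd : z j < z i₀ := hz.2.1 i₀ j hij
    have hvj : v j = 0 := hv j (by omega)
    have hvi₀ : v i₀ = 0 := hv i₀ (le_refl r)
    have hcoord : ∀ i : Fin (K+1), (v + s • e + z) i = v i + s * (if i = j then 1 else 0) + z i := by
      intro i
      simp [he, EuclideanSpace.single_apply]
    have hcoord2 : ∀ i : Fin (K+1), (v + z) i = v i + z i := fun i => by simp
    have habs := abs_lt.mp hs
    have hi₀val : (i₀ : ℕ) = r := rfl
    have hne : ¬ i₀ = j := by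
      intro hcon; rw [Fin.ext_iff] at hcon; omega
    apply le_antisymm
    · refine maxCoord_le _ fun i => ?_
      by_cases hij' : i = j
      · subst hij'
        rw [hcoord, if_pos rfl, mul_one, hvj, zero_add]
        have h1 := le_maxCoord (Nat.succ_pos K) (v + z) i₀
        rw [hcoord2, hvi₀, zero_add] at h1
        linarith [habs.2]
      · rw [hcoord, if_neg hij', mul_zero, add_zero]
        have := le_maxCoord (Nat.succ_pos K) (v + z) i
        rw [hcoord2] at this
        linarith
    · refine maxCoord_le _ fun i => ?_
      by_cases hij' : i = j
      · subst hij'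
        rw [hcoord2, hvj, zero_add]
        have h1 := le_maxCoord (Nat.succ_pos K) (v + s • e + z) i₀
        rw [hcoord, if_neg hne, mul_zero, add_zero, hvi₀, zero_add] at h1
        linarith
      · rw [hcoord2]
        have h1 := le_maxCoord (Nat.succ_pos K) (v + s • e + z) i
        rw [hcoord, if_neg hij', mul_zero, add_zero] at h1
        linarith
  set F : ℝ → EuclideanSpace ℝ (Fin (K+1)) → ℝ := fun s z =>
    s⁻¹ * ((maxCoord (Nat.succ_pos K) (v + s • e + z) - maxCoord (Nat.succ_pos K) (v + z)) * ρ z)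
    with hF
  have hnorm_e : ‖e‖ = 1 := by rw [he, EuclideanSpace.norm_single, norm_one]
  -- DCT
  have hDCT : Filter.Tendsto (fun s => ∫ z, F s z) (nhdsWithin 0 {0}ᶜ) (nhds 0) := by
    have hDCT' : Filter.Tendsto (fun s => ∫ z, F s z) (nhdsWithin 0 {0}ᶜ)
        (nhds (∫ _z : EuclideanSpace ℝ (Fin (K+1)), (0:ℝ))) := by
      refine tendsto_integral_filter_of_dominated_convergence ρ ?_ ?_ (rho_integrable hρint) ?_
      · refine Filter.Eventually.of_forall fun s => ?_
        refine Continuous.aestronglyMeasurable ?_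
        refine continuous_const.mul (Continuous.mul (Continuous.sub ?_ ?_) hρcont)
        · exact (continuous_maxCoord _).comp (continuous_const.add continuous_id)
        · exact (continuous_maxCoord _).comp (continuous_const.add continuous_id)
      · refine Filter.Eventually.of_forall fun s => Filter.Eventually.of_forall fun w => ?_
        rw [hF]
        simp only [Real.norm_eq_abs, abs_mul, abs_inv]
        have hΔ : |maxCoord (Nat.succ_pos K) (v + s • e + w) - maxCoord (Nat.succ_pos K) (v + w)|
            ≤ |s| := by
          have := abs_maxCoord_sub_le (Nat.succ_pos K) (v + s • e + w) (v + w)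
          have heq : (v + s • e + w) - (v + w) = s • e := by abel
          rw [heq, norm_smul, Real.norm_eq_abs, hnorm_e, mul_one] at this
          exact this
        rw [abs_of_nonneg (hρnn w)]
        by_cases hs : s = 0
        · subst hs; simpa using hρnn w
        · calc |s|⁻¹ * (|maxCoord (Nat.succ_pos K) (v + s • e + w) - maxCoord (Nat.succ_pos K) (v + w)| * ρ w)
              ≤ |s|⁻¹ * (|s| * ρ w) := by
                refine mul_le_mul_of_nonneg_left (mul_le_mul_of_nonneg_right hΔ (hρnn w)) (by positivity)
            _ = ρ w := by field_simp
      · refine Filter.Eventually.of_forall fun w => ?_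
        by_cases hw : ρ w = 0
        · have : ∀ s, F s w = 0 := fun s => by rw [hF]; simp [hw]
          simpa [this] using tendsto_const_nhds
        · have hwc := hρsupp hw
          have hδ : 0 < w i₀ - w j := by
            have : w j < w i₀ := hwc.2.1 i₀ j (by rw [Fin.lt_def]; exact hj)
            linarith
          have hev : ∀ᶠ s in nhdsWithin 0 {0}ᶜ, F s w = 0 := by
            have h1 : ∀ᶠ s in nhdsWithin (0:ℝ) {0}ᶜ, |s| < w i₀ - w j := by
              refine Filter.Eventually.filter_mono nhdsWithin_le_nhds ?_
              have : Filter.Tendsto (fun s : ℝ => |s|) (nhds 0) (nhds 0) := by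
                simpa using continuous_abs.tendsto (0:ℝ)
              exact this.eventually_lt_const hδ
            refine h1.mono fun s hs => ?_
            show s⁻¹ * ((maxCoord (Nat.succ_pos K) (v + s • e + w) - maxCoord (Nat.succ_pos K) (v + w)) * ρ w) = 0
            rw [hkey w hwc s hs]
            simp
          have hev' : (fun s => F s w) =ᶠ[nhdsWithin (0:ℝ) {0}ᶜ] (fun _ => (0:ℝ)) := hev
          exact Filter.Tendsto.congr' hev'.symm tendsto_const_nhds
    simpa using hDCT' 
  -- connect to fderiv
  have hD : HasDerivAt (fun s : ℝ => f (v + s • e)) (fderiv ℝ f v e) 0 := by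
    have hcurve : HasDerivAt (fun s : ℝ => v + s • e) e 0 := by
      simpa using ((hasDerivAt_id (0:ℝ)).smul_const e).const_add v
    have hfd0 : HasFDerivAt f (fderiv ℝ f v) (v + (0:ℝ) • e) := by
      simpa using hdiff.hasFDerivAt
    exact hfd0.comp_hasDerivAt 0 hcurve
  have hslope := hasDerivAt_iff_tendsto_slope.mp hD
  have hcongr : (fun s : ℝ => slope (fun s : ℝ => f (v + s • e)) 0 s)
      =ᶠ[nhdsWithin 0 {0}ᶜ] fun s => ∫ z, F s z := by
    refine Filter.eventually_mem_set.mpr self_mem_nhdsWithin |>.mono fun s hs => ?_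
    have hs0 : s ≠ 0 := hs
    show slope (fun s : ℝ => f (v + s • e)) 0 s = ∫ z, F s z
    rw [slope_def_field]
    simp only [zero_smul, add_zero]
    have hf1 := hf (v + s • e)
    have hf2 := hf v
    have hsub : f (v + s • e) - f v
        = ∫ z, ((maxCoord (Nat.succ_pos K) (v + s • e + z) - maxCoord (Nat.succ_pos K) (v + z)) * ρ z) := by
      rw [hf1, hf2, ← integral_sub (integrable_main hD1 hρcont hρnn hρint hρsupp (v + s • e))
        (integrable_main hD1 hρcont hρnn hρint hρsupp v)]
      congr 1
      funext w
      ring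
    rw [sub_zero, div_eq_inv_mul, hsub, ← integral_const_mul]
  have hlim : Filter.Tendsto (fun s : ℝ => slope (fun s : ℝ => f (v + s • e)) 0 s)
      (nhdsWithin 0 {0}ᶜ) (nhds 0) := hDCT.congr' hcongr.symm
  have hfd : fderiv ℝ f v e = 0 := tendsto_nhds_unique hslope hlim
  -- coordinate of gradient
  have hgrad : gradient f v j = fderiv ℝ f v e := by
    have h1 : inner ℝ (EuclideanSpace.single j (1:ℝ)) (gradient f v)
        = (1:ℝ) * gradient f v j := EuclideanSpace.inner_single_left _ _ _
    have h2 : inner ℝ (gradient f v) e = fderiv ℝ f v e := by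
      rw [show gradient f v = (InnerProductSpace.toDual ℝ _).symm (fderiv ℝ f v) from rfl]
      exact InnerProductSpace.toDual_symm_apply
    rw [← h2, he, real_inner_comm, h1, one_mul]
  rw [hgrad, hfd]

end Grad


theorem stmt_18 (K : ℕ) (hK : 1 ≤ K) (D1 : ℝ) (hD1 : 0 < D1)
    -- the smoothing kernel, supported in the ordered chain set with χ = D1/(4√d), d = K+1
    (ρ : EuclideanSpace ℝ (Fin (K + 1)) → ℝ)
    (hρsmooth : ContDiff ℝ (⊤ : ℕ∞) ρ) (hρnn : ∀ z, 0 ≤ ρ z)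
    (hρint : ∫ z, ρ z = 1)
    (hρsupp : Function.support ρ ⊆
      {z | 0 < z ⟨K, Nat.lt_succ_self K⟩ ∧
        (∀ i j : Fin (K + 1), i < j → z j < z i) ∧
        z ⟨0, Nat.succ_pos K⟩ < D1 / (4 * Real.sqrt (K + 1))})
    -- the smoothed max function
    (f : EuclideanSpace ℝ (Fin (K + 1)) → ℝ)
    (hf : ∀ x, f x = ∫ z, maxCoord (Nat.succ_pos K) (x + z) * ρ z)
    -- iterates of a normal-direction span-based method (0-indexed: index t is x_{t+1})
    (z x : ℕ → EuclideanSpace ℝ (Fin (K + 1)))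
    (hz0 : z 0 = 0) (hx0 : x 0 = 0)
    -- `x t` is the Euclidean projection of `z t` onto the ball `C = B(0, D1)`
    (hfeas : ∀ t, x t ∈ Metric.closedBall (0 : EuclideanSpace ℝ (Fin (K + 1))) D1)
    (hproj : ∀ t, ∀ u ∈ Metric.closedBall (0 : EuclideanSpace ℝ (Fin (K + 1))) D1,
      dist (z t) (x t) ≤ dist (z t) u)
    -- span-based update using the normal directions n_i = ∇f(x_i)/‖∇f(x_i)‖
    (hspan : ∀ t : ℕ, z (t + 1) - z 0 ∈ Submodule.span ℝ
      ((fun i => ‖gradient f (x i)‖⁻¹ • gradient f (x i)) '' Set.Iic t ∪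
        (fun i => x i - z i) '' Set.Iic t)) :
    (∀ t ≤ K,
      x t ∈ Submodule.span ℝ
        ((fun i : Fin (K + 1) => EuclideanSpace.single i (1 : ℝ)) '' {i | (i : ℕ) < t}) ∧
      z t ∈ Submodule.span ℝ
        ((fun i : Fin (K + 1) => EuclideanSpace.single i (1 : ℝ)) '' {i | (i : ℕ) < t})) ∧
    (∀ t ≤ K, 0 < f (x t)) ∧
    (∃ u ∈ Metric.closedBall (0 : EuclideanSpace ℝ (Fin (K + 1))) D1,
      f u ≤ -(3 * D1 / (4 * Real.sqrt (K + 1)))) ∧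
    (∀ t ≤ K, 3 * D1 / (4 * Real.sqrt (K + 1)) ≤
      f (x t) - sInf (f '' Metric.closedBall (0 : EuclideanSpace ℝ (Fin (K + 1))) D1)) := by
  have hρcont : Continuous ρ := hρsmooth.continuous
  have hρsupp' : Function.support ρ ⊆ chainSet K D1 := hρsupp
  -- coordinate vanishing by strong induction
  have key : ∀ t, t ≤ K →
      (∀ i : Fin (K+1), t ≤ (i : ℕ) → z t i = 0) ∧ (∀ i : Fin (K+1), t ≤ (i : ℕ) → x t i = 0) := by
    intro t
    induction t using Nat.strong_induction_on with
    | _ t ih =>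
      intro ht
      match t with
      | 0 =>
        constructor <;> intro i _ <;> simp [hz0, hx0] <;> rfl
      | (s+1) =>
        have hzc : ∀ i : Fin (K+1), s+1 ≤ (i : ℕ) → z (s+1) i = 0 := by
          have hsub : ((fun i => ‖gradient f (x i)‖⁻¹ • gradient f (x i)) '' Set.Iic s ∪
              (fun i => x i - z i) '' Set.Iic s) ⊆
              ↑(Submodule.span ℝ ((fun i : Fin (K + 1) => EuclideanSpace.single i (1 : ℝ))
                '' {i : Fin (K+1) | (i : ℕ) < s+1})) := by
            rintro w (⟨i, hi, rfl⟩ | ⟨i, hi, rfl⟩)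
            · have hile : i ≤ s := hi
              have hxi := (ih i (by omega) (by omega)).2
              rw [SetLike.mem_coe, mem_span_single_iff]
              intro j hj
              simp only [Set.mem_setOf_eq, not_lt] at hj
              have hgz : gradient f (x i) j = 0 :=
                grad_coord_zero hD1 hρcont hρnn hρint hρsupp' hf (x i) i (by omega)
                  (fun k hk => hxi k hk) j (by omega)
              show ‖gradient f (x i)‖⁻¹ * gradient f (x i) j = 0
              rw [hgz, mul_zero]
            · have hile : i ≤ s := hi
              have hzi := (ih i (by omega) (by omega)).1
              have hxi := (ih i (by omega) (by omega)).2
              rw [SetLike.mem_coe, mem_span_single_iff]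
              intro j hj
              simp only [Set.mem_setOf_eq, not_lt] at hj
              show x i j - z i j = 0
              rw [hxi j (by omega), hzi j (by omega), sub_zero]
          have hmem := Submodule.span_le.mpr hsub (hspan s)
          rw [mem_span_single_iff] at hmem
          intro i hi
          have := hmem i (by simp only [Set.mem_setOf_eq, not_lt]; omega)
          rw [hz0, sub_zero] at this
          exact this
        refine ⟨hzc, ?_⟩
        obtain ⟨c, hc⟩ := proj_ball_smul hD1 (z (s+1)) (x (s+1)) (hfeas (s+1)) (hproj (s+1))
        intro i hi
        rw [hc]
        show c * z (s+1) i = 0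
        rw [hzc i hi, mul_zero]
  obtain ⟨u, hu, hub⟩ := f_min_bound hD1 hρcont hρnn hρint hρsupp' hf
  have hfpos : ∀ t ≤ K, 0 < f (x t) := fun t ht =>
    f_pos hD1 hρcont hρnn hρint hρsupp' hf (x t) ((key t ht).2 ⟨K, Nat.lt_succ_self K⟩ ht)
  refine ⟨?_, hfpos, ⟨u, hu, hub⟩, ?_⟩
  · intro t ht
    exact ⟨(mem_span_single_iff _ _).mpr fun j hj =>
        (key t ht).2 j (by simpa [not_lt] using hj),
      (mem_span_single_iff _ _).mpr fun j hj =>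
        (key t ht).1 j (by simpa [not_lt] using hj)⟩
  · intro t ht
    have hBdd : BddBelow (f '' Metric.closedBall (0 : EuclideanSpace ℝ (Fin (K + 1))) D1) := by
      refine ⟨-(D1 + D1/4), ?_⟩
      rintro y ⟨v, hv, rfl⟩
      have h1 := f_lower hD1 hρcont hρnn hρint hρsupp' hf v
      have h2 : ‖v‖ ≤ D1 := by simpa [Metric.mem_closedBall, dist_zero_right] using hv
      linarith
    have h5 : sInf (f '' Metric.closedBall (0 : EuclideanSpace ℝ (Fin (K + 1))) D1) ≤ f u :=
      csInf_le hBdd ⟨u, hu, rfl⟩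
    have h6 := hfpos t ht
    linarith
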